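/- arXiv:math/0612634 — 6 statements merged into one kernel-verified Lean document; each statement's English description precedes it below -/
import Mathlib

section
/- Let Λ be a numerical semigroup with enumeration λ and partial genus g(i) = λ_i − i. If g(i) < i for some i ≥ 1, then λ_{i+1} = λ_i + 1. -/
/-- Lemma 1: If the partial genus satisfies g(i) < i for some
i ≥ 1, then λ_{i+1} = λ_i + 1. -/
theorem next_nongap_of_partial_genus_lt
    (Λ : Set ℕ) (h0 : 0 ∈ Λ)
    (hadd : ∀ a b, a ∈ Λ → b ∈ Λ → a + b ∈ Λ)
    (hfin : Λᶜ.Finite)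
    (f : ℕ → ℕ) (hmono : StrictMono f) (hrange : Set.range f = Λ) :
    ∀ i : ℕ, 1 ≤ i → f i - i < i → f (i + 1) = f i + 1 := by
  classical
  intro i hi hg
  -- f 0 = 0
  have hf0 : f 0 = 0 := by
    obtain ⟨j, hj⟩ : 0 ∈ Set.range f := hrange ▸ h0
    have := hmono.monotone (Nat.zero_le j)
    omega
  have hmem : ∀ j, f j ∈ Λ := fun j => hrange ▸ Set.mem_range_self j
  -- key: f i + 1 ∈ Λ
  have hkey : f i + 1 ∈ Λ := by
    by_contra hnot
    set S : Finset ℕ := (Finset.Icc 1 (f i)).filter (· ∈ Λ) with hS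
    set T : Finset ℕ := (Finset.Icc 1 (f i)).filter (· ∉ Λ) with hT
    have hST : S.card + T.card = f i := by
      rw [hS, hT, Finset.card_filter_add_card_filter_not]
      simp
    -- S = image f (Icc 1 i)
    have hSeq : S = (Finset.Icc 1 i).image f := by
      ext x
      simp only [hS, Finset.mem_filter, Finset.mem_Icc, Finset.mem_image]
      constructor
      · rintro ⟨⟨h1, h2⟩, hx⟩
        obtain ⟨j, hj⟩ := hrange ▸ hx
        refine ⟨j, ⟨?_, ?_⟩, hj⟩
        · rcases Nat.eq_zero_or_pos j with rfl | h
          · omega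
          · exact h
        · by_contra h
          push_neg at h
          have := hmono h
          omega
      · rintro ⟨j, ⟨h1, h2⟩, rfl⟩
        refine ⟨⟨?_, hmono.monotone h2⟩, hmem j⟩
        have := hmono (show 0 < j from h1)
        omega
    have hScard : S.card = i := by
      rw [hSeq, Finset.card_image_of_injective _ hmono.injective, Nat.card_Icc]; omega
    -- map a ↦ f i + 1 - a : S → T injectively
    have hmap : ∀ a ∈ S, f i + 1 - a ∈ T := by
      intro a ha
      rw [hS, Finset.mem_filter, Finset.mem_Icc] at ha
      obtain ⟨⟨h1, h2⟩, haΛ⟩ := ha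
      rw [hT, Finset.mem_filter, Finset.mem_Icc]
      refine ⟨⟨by omega, by omega⟩, fun hb => ?_⟩
      have := hadd a (f i + 1 - a) haΛ hb
      rw [show a + (f i + 1 - a) = f i + 1 by omega] at this
      exact hnot this
    have hinj : ∀ a ∈ S, ∀ b ∈ S, f i + 1 - a = f i + 1 - b → a = b := by
      intro a ha b hb h
      rw [hS, Finset.mem_filter, Finset.mem_Icc] at ha hb
      omega
    have := Finset.card_le_card_of_injOn _ hmap hinj
    omega
  -- now f (i+1) = f i + 1
  obtain ⟨j, hj⟩ := hrange ▸ hkey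
  have hji : i < j := by
    by_contra h
    push_neg at h
    have := hmono.monotone h
    omega
  have h1 : f (i + 1) ≤ f j := hmono.monotone hji
  have h2 : f i < f (i + 1) := hmono (Nat.lt_succ_self i)
  omega
end

section
/- For every numerical semigroup Λ with genus g and enumeration λ, the partial genus satisfies g(i) = λ_i − i ≥ i for all 0 ≤ i ≤ g. Equivalently, λ_i ≥ 2i for all i ≤ g. -/
/-!
Let `ℓ` be the `i`-th gap, so that exactly `i` gaps lie in `[0, ℓ]`. Since `ℓ` is a gap, for every
`a ∈ Λ` with `a ≤ ℓ` the complement `ℓ - a` is a gap too; hence `[0, ℓ]` contains at most `i`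
elements of `Λ`, which forces `ℓ < λ_i`. Then `[0, λ_i)` holds the `i` elements `λ_0, …, λ_{i-1}`
of `Λ` and at least the `i` gaps up to `ℓ`, so `λ_i ≥ 2i`.
-/

open Finset

namespace Nat

theorem count_add_count_not (p : ℕ → Prop) [DecidablePred p] (n : ℕ) :
    count p n + count (fun k ↦ ¬p k) n = n := by
  simp only [count_eq_card_filter_range, card_filter_add_card_filter_not, card_range]

theorem count_eq_of_strictMono_of_range_eq {p : ℕ → Prop} [DecidablePred p] {f : ℕ → ℕ}
    (hf : StrictMono f) (hrange : Set.range f = {x | p x}) (i : ℕ) : count p (f i) = i := by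
  have hfilter : {x ∈ range (f i) | p x} = (range i).map ⟨f, hf.injective⟩ := by
    ext x
    have hx : p x ↔ x ∈ Set.range f := by rw [hrange]; rfl
    simp only [mem_filter, mem_range, mem_map, Function.Embedding.coeFn_mk, hx, Set.mem_range]
    constructor
    · rintro ⟨hxi, j, rfl⟩
      exact ⟨j, hf.lt_iff_lt.mp hxi, rfl⟩
    · rintro ⟨j, hji, rfl⟩
      exact ⟨hf hji, j, rfl⟩
  rw [count_eq_card_filter_range, hfilter, card_map, card_range]

theorem count_mem_le_count_notMem_of_notMem {Λ : Set ℕ} [DecidablePred (· ∈ Λ)]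
    (hadd : ∀ a b, a ∈ Λ → b ∈ Λ → a + b ∈ Λ) {ℓ : ℕ} (hℓ : ℓ ∉ Λ) :
    count (· ∈ Λ) (ℓ + 1) ≤ count (· ∉ Λ) (ℓ + 1) := by
  simp only [count_eq_card_filter_range]
  refine card_le_card_of_injOn (ℓ - ·) (fun a ha ↦ ?_) (fun a ha b hb hab ↦ ?_)
  · simp only [coe_filter, mem_range, Set.mem_ofPred_eq] at ha ⊢
    refine ⟨by omega, fun hcompl ↦ hℓ ?_⟩
    simpa [Nat.add_sub_cancel' (Nat.lt_succ_iff.mp ha.1)] using hadd _ _ ha.2 hcompl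
  · simp only [coe_filter, mem_range, Set.mem_ofPred_eq] at ha hb hab
    omega

end Nat

theorem partial_genus_ge_general
    (Λ : Set ℕ)
    (hadd : ∀ a b, a ∈ Λ → b ∈ Λ → a + b ∈ Λ)
    (hfin : Λᶜ.Finite)
    (g : ℕ) (hg : Λᶜ.ncard = g)
    (f : ℕ → ℕ) (hmono : StrictMono f) (hrange : Set.range f = Λ) :
    ∀ i : ℕ, i ≤ g → i ≤ f i - i ∧ 2 * i ≤ f i := by
  classical
  intro i hi
  suffices h : 2 * i ≤ f i from ⟨by omega, h⟩
  obtain rfl | hi0 := Nat.eq_zero_or_pos i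
  · simp
  have hcard : i - 1 < #hfin.toFinset := by
    rw [← Set.ncard_eq_toFinset_card _ hfin]; omega
  set ℓ := Nat.nth (· ∉ Λ) (i - 1)
  have hℓ : ℓ ∉ Λ := Nat.nth_mem_of_lt_card hfin hcard
  have hgaps : Nat.count (· ∉ Λ) (ℓ + 1) = i := by
    rw [Nat.count_succ, Nat.count_nth_of_lt_card_finite hfin hcard, if_pos hℓ]; omega
  have hcount : ∀ j, Nat.count (· ∈ Λ) (f j) = j :=
    Nat.count_eq_of_strictMono_of_range_eq hmono hrange
  have hℓlt : ℓ < f i := by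
    by_contra! hle
    have : i + 1 ≤ i := calc
      i + 1 = Nat.count (· ∈ Λ) (f i + 1) := by
        rw [Nat.count_succ, hcount, if_pos (hrange ▸ Set.mem_range_self i)]
      _ ≤ Nat.count (· ∈ Λ) (ℓ + 1) := Nat.count_monotone _ (by omega)
      _ ≤ Nat.count (· ∉ Λ) (ℓ + 1) := Nat.count_mem_le_count_notMem_of_notMem hadd hℓ
      _ = i := hgaps
    omega
  calc 2 * i = Nat.count (· ∈ Λ) (f i) + Nat.count (· ∉ Λ) (ℓ + 1) := by rw [hcount, hgaps]; ring
    _ ≤ Nat.count (· ∈ Λ) (f i) + Nat.count (· ∉ Λ) (f i) := by gcongr; exact hℓlt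
    _ = f i := Nat.count_add_count_not (· ∈ Λ) (f i)

/-- For every numerical semigroup of genus g, the partial genus
satisfies f i - i ≥ i for all 0 ≤ i ≤ g; equivalently f i ≥ 2i for i ≤ g. -/
theorem partial_genus_ge
    (Λ : Set ℕ) (h0 : 0 ∈ Λ)
    (hadd : ∀ a b, a ∈ Λ → b ∈ Λ → a + b ∈ Λ)
    (hfin : Λᶜ.Finite)
    (g : ℕ) (hg : Λᶜ.ncard = g)
    (f : ℕ → ℕ) (hmono : StrictMono f) (hrange : Set.range f = Λ) :
    ∀ i : ℕ, i ≤ g → i ≤ f i - i ∧ 2 * i ≤ f i :=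
  partial_genus_ge_general Λ hadd hfin g hg f hmono hrange
end

section
/- The square diagram τ(Λ) of a numerical semigroup Λ of genus g is a Dyck path of order g: the lattice path from (0,0) built from steps e(i) (right-step if i ∈ Λ, up-step if i ∉ Λ, for 1 ≤ i ≤ 2g) ends at (g,g) and never goes below the diagonal x = y. Concretely: among 1,…,2g there are exactly g elements of Λ and g gaps, and for every k ≤ 2g, the number of gaps in [1,k] is at least the number of elements of Λ in [1,k]. -/
private lemma icc_ncard (k : ℕ) : (Set.Icc 1 k : Set ℕ).ncard = k := by
  rw [← Finset.coe_Icc, Set.ncard_coe_finset, Nat.card_Icc]; omega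

private lemma prefix_le (Λ : Set ℕ) (h0 : 0 ∈ Λ)
    (hadd : ∀ a b, a ∈ Λ → b ∈ Λ → a + b ∈ Λ)
    (g : ℕ) (hg : Λᶜ.ncard = g)
    (split : ∀ k : ℕ, {x : ℕ | x ∈ Set.Icc 1 k ∧ x ∈ Λ}.ncard
      + {x : ℕ | x ∈ Set.Icc 1 k ∧ x ∉ Λ}.ncard = k)
    (k : ℕ) (hk : k ≤ 2 * g) :
    {x : ℕ | x ∈ Set.Icc 1 k ∧ x ∈ Λ}.ncard
      ≤ {x : ℕ | x ∈ Set.Icc 1 k ∧ x ∉ Λ}.ncard := by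
  classical
  have hBf : {x : ℕ | x ∈ Set.Icc 1 k ∧ x ∉ Λ}.Finite :=
    (Set.finite_Icc 1 k).subset fun x hx => hx.1
  by_cases hex : ∃ m, m ∉ Λ ∧ k < m
  · -- minimal gap above k
    set m := Nat.find hex with hm
    obtain ⟨hmΛ, hkm⟩ := Nat.find_spec hex
    have hmin : ∀ j, j < m → ¬(j ∉ Λ ∧ k < j) := fun j hj => Nat.find_min hex hj
    refine Set.ncard_le_ncard_of_injOn (fun x => m - x) ?_ ?_ hBf
    · rintro x ⟨⟨hx1, hxk⟩, hxΛ⟩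
      have hxm : x < m := lt_of_le_of_lt hxk hkm
      have hgap : m - x ∉ Λ := by
        intro hc
        have := hadd x (m - x) hxΛ hc
        rw [Nat.add_sub_cancel' hxm.le] at this
        exact hmΛ this
      have h1 : 1 ≤ m - x := by omega
      have h2 : m - x ≤ k := by
        by_contra hc
        exact hmin (m - x) (by omega) ⟨hgap, by omega⟩
      exact ⟨⟨h1, h2⟩, hgap⟩
    · rintro x ⟨⟨hx1, hxk⟩, _⟩ y ⟨⟨hy1, hyk⟩, _⟩ hxy
      simp only at hxy
      omega
  · push_neg at hex
    have hBeq : {x : ℕ | x ∈ Set.Icc 1 k ∧ x ∉ Λ} = Λᶜ := by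
      ext x
      constructor
      · rintro ⟨_, hx⟩; exact hx
      · intro hx
        have h1 : 1 ≤ x := by
          rcases Nat.eq_zero_or_pos x with h | h
          · exact absurd (h ▸ h0) hx
          · exact h
        exact ⟨⟨h1, hex x hx⟩, hx⟩
    have hB : {x : ℕ | x ∈ Set.Icc 1 k ∧ x ∉ Λ}.ncard = g := by rw [hBeq, hg]
    have := split k
    omega

/-- The square diagram of a numerical semigroup of genus g is a
Dyck path of order g: among 1,…,2g there are exactly g elements of Λ and g
gaps, and every prefix [1,k] contains at least as many gaps as elements of Λ. -/
theorem square_diagram_is_dyck_path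
    (Λ : Set ℕ) (h0 : 0 ∈ Λ)
    (hadd : ∀ a b, a ∈ Λ → b ∈ Λ → a + b ∈ Λ)
    (hfin : Λᶜ.Finite)
    (g : ℕ) (hg : Λᶜ.ncard = g) :
    {x : ℕ | x ∈ Set.Icc 1 (2 * g) ∧ x ∈ Λ}.ncard = g ∧
    {x : ℕ | x ∈ Set.Icc 1 (2 * g) ∧ x ∉ Λ}.ncard = g ∧
    ∀ k : ℕ, k ≤ 2 * g →
      {x : ℕ | x ∈ Set.Icc 1 k ∧ x ∈ Λ}.ncard
        ≤ {x : ℕ | x ∈ Set.Icc 1 k ∧ x ∉ Λ}.ncard := by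
  classical
  have split : ∀ k : ℕ, {x : ℕ | x ∈ Set.Icc 1 k ∧ x ∈ Λ}.ncard
      + {x : ℕ | x ∈ Set.Icc 1 k ∧ x ∉ Λ}.ncard = k := by
    intro k
    have hIf : (Set.Icc 1 k : Set ℕ).Finite := Set.finite_Icc 1 k
    have hAf : {x : ℕ | x ∈ Set.Icc 1 k ∧ x ∈ Λ}.Finite :=
      hIf.subset fun x hx => hx.1
    have hBf : {x : ℕ | x ∈ Set.Icc 1 k ∧ x ∉ Λ}.Finite :=
      hIf.subset fun x hx => hx.1
    have hdisj : Disjoint {x : ℕ | x ∈ Set.Icc 1 k ∧ x ∈ Λ}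
        {x : ℕ | x ∈ Set.Icc 1 k ∧ x ∉ Λ} := by
      rw [Set.disjoint_left]; rintro x ⟨_, hx⟩ ⟨_, hx'⟩; exact hx' hx
    have hunion : {x : ℕ | x ∈ Set.Icc 1 k ∧ x ∈ Λ} ∪ {x : ℕ | x ∈ Set.Icc 1 k ∧ x ∉ Λ}
        = Set.Icc 1 k := by
      ext x; by_cases h : x ∈ Λ <;> simp [h]
    have h := Set.ncard_union_eq hdisj hAf hBf
    rw [hunion, icc_ncard] at h
    omega
  have hpre := prefix_le Λ h0 hadd g hg split
  -- no gap above 2g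
  have hnogap : ∀ m, m ∉ Λ → m ≤ 2 * g := by
    intro m hm
    by_contra hc
    push_neg at hc
    have hex : ∃ m, m ∉ Λ ∧ 2 * g < m := ⟨m, hm, hc⟩
    set m₀ := Nat.find hex with hm₀
    obtain ⟨hm₀Λ, hm₀g⟩ := Nat.find_spec hex
    have hBf : {x : ℕ | x ∈ Set.Icc 1 (2 * g) ∧ x ∉ Λ}.Finite :=
      (Set.finite_Icc 1 (2 * g)).subset fun x hx => hx.1
    have hnot : m₀ ∉ {x : ℕ | x ∈ Set.Icc 1 (2 * g) ∧ x ∉ Λ} := by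
      rintro ⟨⟨_, h2⟩, _⟩; omega
    have hsub : insert m₀ {x : ℕ | x ∈ Set.Icc 1 (2 * g) ∧ x ∉ Λ} ⊆ Λᶜ := by
      rintro x (rfl | ⟨_, hx⟩)
      · exact hm₀Λ
      · exact hx
    have h1 : {x : ℕ | x ∈ Set.Icc 1 (2 * g) ∧ x ∉ Λ}.ncard + 1 ≤ g := by
      have h := Set.ncard_le_ncard hsub hfin
      rw [Set.ncard_insert_of_notMem hnot hBf, hg] at h
      omega
    have h2 := hpre (2 * g) le_rfl
    have h3 := split (2 * g)
    omega
  have hBeq : {x : ℕ | x ∈ Set.Icc 1 (2 * g) ∧ x ∉ Λ} = Λᶜ := by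
    ext x
    constructor
    · rintro ⟨_, hx⟩; exact hx
    · intro hx
      have h1 : 1 ≤ x := by
        rcases Nat.eq_zero_or_pos x with h | h
        · exact absurd (h ▸ h0) hx
        · exact h
      exact ⟨⟨h1, hnogap x hx⟩, hx⟩
  have hB : {x : ℕ | x ∈ Set.Icc 1 (2 * g) ∧ x ∉ Λ}.ncard = g := by rw [hBeq, hg]
  have hs := split (2 * g)
  exact ⟨by omega, hB, hpre⟩
end

section
/- For every k with 1 ≤ k ≤ 2g, where g is the genus of a numerical semigroup Λ, the number of gaps of Λ in {1, …, k} is at least the number of elements of Λ in {1, …, k}. -/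
open Classical in
/-- Pigeonhole step: if more than half of `[1,m]` lies in `Λ`, then `m+1 ∈ Λ`. -/
private lemma gaps_prefix_aux_step (Λ : Set ℕ)
    (hadd : ∀ a b, a ∈ Λ → b ∈ Λ → a + b ∈ Λ)
    (m : ℕ) (h : m < 2 * ((Finset.Icc 1 m).filter (· ∈ Λ)).card) : m + 1 ∈ Λ := by
  set A := (Finset.Icc 1 m).filter (· ∈ Λ) with hA
  set B := A.image (fun a => m + 1 - a) with hB
  have hAsub : A ⊆ Finset.Icc 1 m := Finset.filter_subset _ _
  have hBsub : B ⊆ Finset.Icc 1 m := by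
    intro x hx
    simp only [hB, Finset.mem_image] at hx
    obtain ⟨a, ha, rfl⟩ := hx
    have := hAsub ha
    simp only [Finset.mem_Icc] at this
    simp only [Finset.mem_Icc]
    refine ⟨by omega, by omega⟩
  have hcardB : B.card = A.card := by
    apply Finset.card_image_of_injOn
    intro a ha b hb hab
    have ha' := hAsub ha; have hb' := hAsub hb
    simp only [Finset.mem_Icc] at ha' hb'
    have hab' : m + 1 - a = m + 1 - b := hab
    omega
  have hinter : (A ∩ B).Nonempty := by
    by_contra h'
    have hempty : A ∩ B = ∅ := Finset.not_nonempty_iff_eq_empty.mp h'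
    have h1 : (A ∩ B).card + (A ∪ B).card = A.card + B.card :=
      Finset.card_inter_add_card_union A B
    have h2 : (A ∪ B).card ≤ (Finset.Icc 1 m).card :=
      Finset.card_le_card (Finset.union_subset hAsub hBsub)
    have h3 : (Finset.Icc 1 m).card = m := by simp
    rw [hempty, Finset.card_empty, hcardB] at h1
    omega
  obtain ⟨x, hx⟩ := hinter
  rw [Finset.mem_inter] at hx
  obtain ⟨hxA, hxB⟩ := hx
  simp only [hB, Finset.mem_image] at hxB
  obtain ⟨a, haA, hax⟩ := hxB
  have hxΛ : x ∈ Λ := (Finset.mem_filter.mp hxA).2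
  have haΛ : a ∈ Λ := (Finset.mem_filter.mp haA).2
  have ha' := hAsub haA
  simp only [Finset.mem_Icc] at ha'
  have : m + 1 = a + x := by omega
  rw [this]
  exact hadd a x haΛ hxΛ

/-- For every 1 ≤ k ≤ 2g, the number of gaps of Λ in {1,…,k}
is at least the number of elements of Λ in {1,…,k}. -/
theorem gaps_prefix_ge_nongaps_prefix
    (Λ : Set ℕ) (h0 : 0 ∈ Λ)
    (hadd : ∀ a b, a ∈ Λ → b ∈ Λ → a + b ∈ Λ)
    (hfin : Λᶜ.Finite)
    (g : ℕ) (hg : Λᶜ.ncard = g) :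
    ∀ k : ℕ, 1 ≤ k → k ≤ 2 * g →
      {x : ℕ | x ∈ Set.Icc 1 k ∧ x ∈ Λ}.ncard
        ≤ {x : ℕ | x ∈ Set.Icc 1 k ∧ x ∉ Λ}.ncard := by
  classical
  intro k hk1 hk2
  have hsetN : {x : ℕ | x ∈ Set.Icc 1 k ∧ x ∈ Λ}
      = ↑((Finset.Icc 1 k).filter (· ∈ Λ)) := by
    ext x; simp [Set.mem_Icc, and_comm]
  have hsetG : {x : ℕ | x ∈ Set.Icc 1 k ∧ x ∉ Λ}
      = ↑((Finset.Icc 1 k).filter (· ∉ Λ)) := by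
    ext x; simp [Set.mem_Icc, and_comm]
  rw [hsetN, hsetG, Set.ncard_coe_finset, Set.ncard_coe_finset]
  by_contra hcon
  push_neg at hcon
  -- abbreviations
  set N : ℕ → ℕ := fun m => ((Finset.Icc 1 m).filter (· ∈ Λ)).card with hN
  have hsum : ∀ m, N m + ((Finset.Icc 1 m).filter (· ∉ Λ)).card = m := by
    intro m
    have := Finset.card_filter_add_card_filter_not
      (s := Finset.Icc 1 m) (p := (· ∈ Λ))
    simpa using this
  have hNk : N k = ((Finset.Icc 1 k).filter (· ∈ Λ)).card := rfl
  have hkey : k < 2 * N k := by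
    have := hsum k
    omega
  -- claim: for all j, k + j < 2 * N (k + j)
  have hclaim : ∀ j, k + j < 2 * N (k + j) := by
    intro j
    induction j with
    | zero => simpa using hkey
    | succ j ih =>
      have hmem : k + j + 1 ∈ Λ := gaps_prefix_aux_step Λ hadd (k + j) ih
      have hstep : N (k + j + 1) = N (k + j) + 1 := by
        have hicc : Finset.Icc 1 (k + j + 1)
            = insert (k + j + 1) (Finset.Icc 1 (k + j)) := by
          exact (Finset.insert_Icc_right_eq_Icc_add_one (by omega)).symm
        rw [hN]
        simp only [hicc, Finset.filter_insert, if_pos hmem]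
        rw [Finset.card_insert_of_notMem]
        simp [Finset.mem_Icc]
      have h' : N (k + (j + 1)) = N (k + j + 1) := rfl
      omega
  -- every x > k is in Λ
  have hbig : ∀ x, k < x → x ∈ Λ := by
    intro x hx
    have hx' : x = (k + (x - k - 1)) + 1 := by omega
    rw [hx']
    exact gaps_prefix_aux_step Λ hadd _ (hclaim (x - k - 1))
  -- therefore all gaps lie in [1, k]
  have hcompl : Λᶜ = ↑((Finset.Icc 1 k).filter (· ∉ Λ)) := by
    ext x
    simp only [Set.mem_compl_iff, Finset.coe_filter, Set.mem_setOf_eq,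
      Finset.mem_Icc]
    constructor
    · intro hx
      refine ⟨⟨?_, ?_⟩, hx⟩
      · rcases Nat.eq_zero_or_pos x with h | h
        · exact absurd (h ▸ h0) hx
        · exact h
      · by_contra h
        exact hx (hbig x (by omega))
    · exact fun h => h.2
  have hgG : g = ((Finset.Icc 1 k).filter (· ∉ Λ)).card := by
    rw [← hg, hcompl, Set.ncard_coe_finset]
  have := hsum k
  omega
end

section
/- The number of numerical semigroups of genus g is at most the Catalan number C_g = (1/(g+1))·C(2g, g). -/
/-!
Read the square diagram of a numerical semigroup `Λ` of genus `g` as the word over `1, …, 2g`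
with a `U` at each gap and a `D` at each element of `Λ`. Every gap is below `2g`, so the word
determines `Λ`, and it is a Dyck word of semilength `g`. For the prefix condition on `[1, n]`,
descend from `n = 2g`, where both letters occur `g` times: passing an element `n + 1` of `Λ` only
helps, and if `n + 1` is a gap then `a ↦ n + 1 - a` maps the elements of `Λ` in `[1, n]`
injectively to gaps, because `a + (n + 1 - a) ∉ Λ`. The same reflection bounds the largest gap.
-/

open Finset DyckStep

theorem card_filter_Icc_one_eq_countP_range' (p : ℕ → Prop) [DecidablePred p] (n : ℕ) :
    #{a ∈ Icc 1 n | p a} = (List.range' 1 n).countP p := by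
  simp [Nat.Icc_eq_range', Finset.card, Finset.filter_val, List.countP_eq_length_filter]

theorem card_filter_Icc_one_succ (p : ℕ → Prop) [DecidablePred p] (n : ℕ) :
    #{a ∈ Icc 1 (n + 1) | p a} = #{a ∈ Icc 1 n | p a} + if p (n + 1) then 1 else 0 := by
  simp only [card_filter_Icc_one_eq_countP_range', List.range'_concat, List.countP_append,
    List.countP_singleton, decide_eq_true_eq, Nat.one_mul, Nat.add_comm 1 n]

theorem card_filter_Icc_one_add_card_filter_not (p : ℕ → Prop) [DecidablePred p] (n : ℕ) :
    #{a ∈ Icc 1 n | p a} + #{a ∈ Icc 1 n | ¬p a} = n := by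
  rw [card_filter_add_card_filter_not, Nat.card_Icc, add_tsub_cancel_right]

section Gaps

variable {Λ : Set ℕ} [DecidablePred (· ∈ Λ)]

theorem card_filter_mem_Icc_le_card_filter_notMem_Icc_of_succ_notMem
    (hadd : ∀ a b, a ∈ Λ → b ∈ Λ → a + b ∈ Λ) {n : ℕ} (hn : n + 1 ∉ Λ) :
    #{a ∈ Icc 1 n | a ∈ Λ} ≤ #{a ∈ Icc 1 n | a ∉ Λ} := by
  refine card_le_card_of_injOn (n + 1 - ·) (fun a ha => ?_) (fun a ha b hb hab => ?_)
  · simp only [coe_filter, mem_Icc, Set.mem_ofPred_eq] at ha ⊢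
    refine ⟨by omega, fun h => hn ?_⟩
    simpa [Nat.add_sub_cancel' (by omega : a ≤ n + 1)] using hadd a _ ha.2 h
  · simp only [coe_filter, mem_Icc, Set.mem_ofPred_eq] at ha hb hab
    omega

theorem card_filter_notMem_le_ncard_compl (hfin : Λᶜ.Finite) (s : Finset ℕ) :
    #{a ∈ s | a ∉ Λ} ≤ Λᶜ.ncard := by
  rw [← Set.ncard_coe_finset]
  exact Set.ncard_le_ncard (fun a ha => (mem_filter.1 ha).2) hfin

theorem card_filter_notMem_Icc_eq_ncard_compl {n : ℕ} (h : ∀ a ∉ Icc 1 n, a ∈ Λ) :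
    #{a ∈ Icc 1 n | a ∉ Λ} = Λᶜ.ncard := by
  rw [← Set.ncard_coe_finset]
  congr 1
  ext a
  simpa using fun ha => not_imp_comm.1 (h a) ha

theorem lt_two_mul_ncard_compl_of_notMem (hadd : ∀ a b, a ∈ Λ → b ∈ Λ → a + b ∈ Λ)
    (hfin : Λᶜ.Finite) {f : ℕ} (hf : f ∉ Λ) : f < 2 * Λᶜ.ncard := by
  obtain _ | n := f
  · have := (Set.ncard_pos hfin).2 ⟨0, hf⟩
    omega
  have hrefl := card_filter_mem_Icc_le_card_filter_notMem_Icc_of_succ_notMem hadd hf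
  have hsplit := card_filter_Icc_one_add_card_filter_not (· ∈ Λ) n
  have hgaps := card_filter_notMem_le_ncard_compl hfin (Icc 1 (n + 1))
  rw [card_filter_Icc_one_succ, if_pos hf] at hgaps
  omega

theorem mem_of_notMem_Icc_one_two_mul_ncard_compl (h0 : 0 ∈ Λ)
    (hadd : ∀ a b, a ∈ Λ → b ∈ Λ → a + b ∈ Λ) (hfin : Λᶜ.Finite) {a : ℕ}
    (ha : a ∉ Icc 1 (2 * Λᶜ.ncard)) : a ∈ Λ := by
  by_contra h
  have := lt_two_mul_ncard_compl_of_notMem hadd hfin h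
  obtain rfl | _ := Nat.eq_zero_or_pos a
  · exact h h0
  · exact ha (mem_Icc.2 ⟨by omega, by omega⟩)

theorem card_filter_mem_Icc_le_card_filter_notMem_Icc (h0 : 0 ∈ Λ)
    (hadd : ∀ a b, a ∈ Λ → b ∈ Λ → a + b ∈ Λ) (hfin : Λᶜ.Finite) {n : ℕ}
    (hn : n ≤ 2 * Λᶜ.ncard) : #{a ∈ Icc 1 n | a ∈ Λ} ≤ #{a ∈ Icc 1 n | a ∉ Λ} := by
  induction hn using Nat.decreasingInduction with
  | self =>
    have hgaps := card_filter_notMem_Icc_eq_ncard_compl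
      fun _ => mem_of_notMem_Icc_one_two_mul_ncard_compl h0 hadd hfin
    have hsplit := card_filter_Icc_one_add_card_filter_not (· ∈ Λ) (2 * Λᶜ.ncard)
    omega
  | of_succ n _ ih =>
    by_cases hn : n + 1 ∈ Λ
    · simp only [card_filter_Icc_one_succ, hn, if_true, if_false, not_true] at ih
      omega
    · exact card_filter_mem_Icc_le_card_filter_notMem_Icc_of_succ_notMem hadd hn

end Gaps

section SquareDiagram

variable (Λ : Set ℕ) [DecidablePred (· ∈ Λ)]

def squareDiagramWord (n : ℕ) : List DyckStep :=
  (List.range' 1 n).map fun a => if a ∈ Λ then D else U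

theorem count_D_squareDiagramWord (n : ℕ) :
    (squareDiagramWord Λ n).count D = #{a ∈ Icc 1 n | a ∈ Λ} := by
  rw [squareDiagramWord, List.count, List.countP_map, card_filter_Icc_one_eq_countP_range']
  congr 1; funext a; by_cases h : a ∈ Λ <;> simp [h]

theorem count_U_squareDiagramWord (n : ℕ) :
    (squareDiagramWord Λ n).count U = #{a ∈ Icc 1 n | a ∉ Λ} := by
  rw [squareDiagramWord, List.count, List.countP_map, card_filter_Icc_one_eq_countP_range']
  congr 1; funext a; by_cases h : a ∈ Λ <;> simp [h]

theorem take_squareDiagramWord (i n : ℕ) :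
    (squareDiagramWord Λ n).take i = squareDiagramWord Λ (min i n) := by
  rw [squareDiagramWord, squareDiagramWord, ← List.map_take]
  rcases le_total i n with h | h
  · rw [List.take_range'_of_length_ge h, min_eq_left h]
  · rw [List.take_range'_of_length_le h, min_eq_right h]

variable {Λ}

theorem eq_of_squareDiagramWord_eq {Λ' : Set ℕ} [DecidablePred (· ∈ Λ')] {n : ℕ}
    (hΛ : ∀ a ∉ Icc 1 n, a ∈ Λ) (hΛ' : ∀ a ∉ Icc 1 n, a ∈ Λ')
    (h : squareDiagramWord Λ n = squareDiagramWord Λ' n) : Λ = Λ' := by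
  rw [squareDiagramWord, squareDiagramWord, List.map_inj_left] at h
  ext a
  by_cases ha : a ∈ Icc 1 n
  · have := h a (List.mem_range'_1.2 (by rw [mem_Icc] at ha; omega))
    split_ifs at this <;> simp_all
  · exact iff_of_true (hΛ a ha) (hΛ' a ha)

theorem exists_dyckWord_toList_eq_squareDiagramWord (h0 : 0 ∈ Λ)
    (hadd : ∀ a b, a ∈ Λ → b ∈ Λ → a + b ∈ Λ) (hfin : Λᶜ.Finite) :
    ∃ p : DyckWord, p.semilength = Λᶜ.ncard ∧
      p.toList = squareDiagramWord Λ (2 * Λᶜ.ncard) := by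
  have hgaps := card_filter_notMem_Icc_eq_ncard_compl
    fun _ => mem_of_notMem_Icc_one_two_mul_ncard_compl h0 hadd hfin
  have hsplit := card_filter_Icc_one_add_card_filter_not (· ∈ Λ) (2 * Λᶜ.ncard)
  refine ⟨⟨squareDiagramWord Λ (2 * Λᶜ.ncard), ?_, fun i => ?_⟩, ?_, rfl⟩
  · rw [count_U_squareDiagramWord, count_D_squareDiagramWord]
    omega
  · rw [take_squareDiagramWord, count_D_squareDiagramWord, count_U_squareDiagramWord]
    exact card_filter_mem_Icc_le_card_filter_notMem_Icc h0 hadd hfin (min_le_right _ _)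
  · exact (count_U_squareDiagramWord Λ _).trans hgaps

end SquareDiagram

/-- The number of numerical semigroups of genus g is at most the
Catalan number C_g. -/
theorem card_numerical_semigroups_le_catalan (g : ℕ) :
    {Λ : Set ℕ | 0 ∈ Λ ∧ (∀ a b, a ∈ Λ → b ∈ Λ → a + b ∈ Λ) ∧
        Λᶜ.Finite ∧ Λᶜ.ncard = g}.ncard ≤ catalan g := by
  classical
  set S := {Λ : Set ℕ | 0 ∈ Λ ∧ (∀ a b, a ∈ Λ → b ∈ Λ → a + b ∈ Λ) ∧
    Λᶜ.Finite ∧ Λᶜ.ncard = g}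
  have hmaps : ∀ Λ ∈ S, squareDiagramWord Λ (2 * g) ∈
      Set.range fun p : {p : DyckWord // p.semilength = g} => p.1.toList := by
    rintro Λ ⟨h0, hadd, hfin, rfl⟩
    obtain ⟨p, hp, hpΛ⟩ := exists_dyckWord_toList_eq_squareDiagramWord h0 hadd hfin
    exact ⟨⟨p, hp⟩, hpΛ⟩
  have hinj : Set.InjOn (squareDiagramWord · (2 * g)) S := by
    rintro Λ ⟨h0, hadd, hfin, rfl⟩ Λ' ⟨h0', hadd', hfin', hg'⟩
    refine eq_of_squareDiagramWord_eq
      (fun _ => mem_of_notMem_Icc_one_two_mul_ncard_compl h0 hadd hfin) fun _ => ?_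
    rw [← hg']
    exact mem_of_notMem_Icc_one_two_mul_ncard_compl h0' hadd' hfin'
  calc S.ncard ≤ Nat.card {p : DyckWord // p.semilength = g} := by
        rw [← Set.ncard_range_of_injective fun _ _ h => Subtype.ext (DyckWord.ext h)]
        exact Set.ncard_le_ncard_of_injOn _ hmaps hinj (Set.finite_range _)
    _ = catalan g := by
      rw [Nat.card_eq_fintype_card, DyckWord.card_dyckWord_semilength_eq_catalan]
end

section
/- The number of symmetric numerical semigroups of genus g is at most C(g−1, ⌈(g−1)/2⌉). -/
/-!
The map `x ↦ 2g - 1 - x` exchanges the `g` elements of `Λ` below `2g` with its `g` gaps, so for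
`g ≤ y < 2g` exactly one of `y` and `2g - 1 - y` lies in `Λ`: a symmetric semigroup of genus `g`
is determined by `S = Λ ∩ [1, g - 1]`. If `v` is the least gap `≥ k` (one exists for
`k ≤ 2g - 1`), then `x ↦ v - x` maps `Λ ∩ [1, k]` injectively into the gaps in `[1, k)`, so
`2 · #(S ∩ [1, k]) ≤ k` for every `k`: `S` is a ballot set. The ballot sets `S ⊆ [1, n]` with
`#S ≤ m` number `C(n, m)` whenever `2m ≤ n`: splitting on whether `n + 1 ∈ S` gives Pascal's
recursion, and when `n = 2m + 1` no ballot set in `[1, n]` has `m + 1` elements, matching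
`C(n, m + 1) = C(n, m)`.
-/

open Finset Classical

-- As a lattice path with a down-step at each element of `S`: the path never goes below zero.
def IsBallot (S : Finset ℕ) : Prop := ∀ k, 2 * #{x ∈ S | x ≤ k} ≤ k

noncomputable def ballotSets (n m : ℕ) : Finset (Finset ℕ) :=
  {S ∈ (Icc 1 n).powerset | #S ≤ m ∧ IsBallot S}

theorem IsBallot.two_mul_card_le {S : Finset ℕ} {n : ℕ} (h : IsBallot S) (hS : S ⊆ Icc 1 n) :
    2 * #S ≤ n := by
  have := h n
  rwa [filter_true_of_mem fun x hx => (mem_Icc.1 (hS hx)).2] at this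

theorem isBallot_insert_iff {T : Finset ℕ} {n : ℕ} (hT : T ⊆ Icc 1 n) :
    IsBallot (insert (n + 1) T) ↔ IsBallot T ∧ 2 * (#T + 1) ≤ n + 1 := by
  have hnT : n + 1 ∉ T := fun h => by simpa using hT h
  have hprefix (k : ℕ) :
      #{x ∈ insert (n + 1) T | x ≤ k} = #{x ∈ T | x ≤ k} + if n + 1 ≤ k then 1 else 0 := by
    rw [filter_insert]
    split_ifs <;> simp [hnT]
  have hfull (k : ℕ) (hk : n ≤ k) : {x ∈ T | x ≤ k} = T :=
    filter_true_of_mem fun x hx => (mem_Icc.1 (hT hx)).2.trans hk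
  constructor
  · intro h
    refine ⟨fun k => ?_, ?_⟩
    · have := h k
      rw [hprefix] at this
      split_ifs at this <;> omega
    · have := h (n + 1)
      rwa [hprefix, hfull _ n.le_succ, if_pos le_rfl] at this
  · rintro ⟨h, hcard⟩ k
    rw [hprefix]
    split_ifs with hk
    · rw [hfull k (by omega)]
      omega
    · exact h k

theorem ballotSets_zero (n : ℕ) : ballotSets n 0 = {∅} := by
  ext S
  simp only [ballotSets, mem_filter, mem_powerset, Nat.le_zero, card_eq_zero, mem_singleton]
  constructor
  · exact fun h => h.2.1
  · rintro rfl
    simp [IsBallot]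

theorem ballotSets_succ_of_le {n m : ℕ} (h : n ≤ 2 * m + 1) :
    ballotSets n (m + 1) = ballotSets n m := by
  ext S
  simp only [ballotSets, mem_filter, mem_powerset]
  constructor
  · rintro ⟨hS, -, hb⟩
    exact ⟨hS, by have := hb.two_mul_card_le hS; omega, hb⟩
  · rintro ⟨hS, hm, hb⟩
    exact ⟨hS, by omega, hb⟩

theorem filter_notMem_ballotSets_succ (n m : ℕ) :
    {S ∈ ballotSets (n + 1) m | n + 1 ∉ S} = ballotSets n m := by
  have hIcc : Icc 1 (n + 1) = insert (n + 1) (Icc 1 n) :=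
    (insert_Icc_right_eq_Icc_add_one (by omega)).symm
  ext S
  simp only [ballotSets, mem_filter, mem_powerset, hIcc]
  constructor
  · rintro ⟨⟨hS, hm, hb⟩, hn⟩
    exact ⟨(subset_insert_iff_of_notMem hn).1 hS, hm, hb⟩
  · rintro ⟨hS, hm, hb⟩
    exact ⟨⟨hS.trans (subset_insert _ _), hm, hb⟩, fun h => by simpa using hS h⟩

theorem card_filter_mem_ballotSets_succ_succ {n m : ℕ} (h : 2 * (m + 1) ≤ n + 1) :
    #{S ∈ ballotSets (n + 1) (m + 1) | n + 1 ∈ S} = #(ballotSets n m) := by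
  have hIcc : Icc 1 (n + 1) = insert (n + 1) (Icc 1 n) :=
    (insert_Icc_right_eq_Icc_add_one (by omega)).symm
  refine (card_nbij' (fun S => S.erase (n + 1)) (insert (n + 1)) ?_ ?_ ?_ ?_)
  · intro S hS
    simp only [coe_filter, ballotSets, mem_filter, mem_powerset, Set.mem_ofPred_eq] at hS ⊢
    obtain ⟨⟨hS, hm, hb⟩, hn⟩ := hS
    have hS' : S.erase (n + 1) ⊆ Icc 1 n := subset_insert_iff.1 (hIcc ▸ hS)
    rw [← insert_erase hn, isBallot_insert_iff hS'] at hb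
    exact ⟨hS', by rw [card_erase_of_mem hn]; omega, hb.1⟩
  · intro T hT
    simp only [coe_filter, ballotSets, mem_filter, mem_powerset, Set.mem_ofPred_eq] at hT ⊢
    obtain ⟨hT, hm, hb⟩ := hT
    exact ⟨⟨hIcc ▸ insert_subset_insert _ hT, (card_insert_le _ _).trans (by omega),
      (isBallot_insert_iff hT).2 ⟨hb, by omega⟩⟩, mem_insert_self _ _⟩
  · intro S hS
    simp only [coe_filter, Set.mem_ofPred_eq] at hS
    exact insert_erase hS.2
  · intro T hT
    simp only [mem_coe, ballotSets, mem_filter, mem_powerset] at hT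
    exact erase_insert fun h => by simpa using hT.1 h

theorem card_ballotSets_succ_succ {n m : ℕ} (h : 2 * (m + 1) ≤ n + 1) :
    #(ballotSets (n + 1) (m + 1)) = #(ballotSets n (m + 1)) + #(ballotSets n m) := by
  rw [← card_filter_add_card_filter_not (n + 1 ∈ ·), filter_notMem_ballotSets_succ,
    card_filter_mem_ballotSets_succ_succ h, add_comm]

theorem card_ballotSets {n m : ℕ} (h : 2 * m ≤ n) : #(ballotSets n m) = n.choose m := by
  induction n generalizing m with
  | zero =>
    obtain rfl : m = 0 := by omega
    simp [ballotSets_zero]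
  | succ n ih =>
    cases m with
    | zero => simp [ballotSets_zero]
    | succ m =>
      rw [card_ballotSets_succ_succ h, Nat.choose_succ_succ', ih (m := m) (by omega),
        add_comm (n.choose m)]
      congr 1
      rcases (by omega : 2 * (m + 1) ≤ n ∨ n = 2 * m + 1) with hle | rfl
      · exact ih hle
      · rw [ballotSets_succ_of_le le_rfl, ih (by omega),
          Nat.choose_symm_of_eq_add (by omega : 2 * m + 1 = (m + 1) + m)]

namespace NumericalSemigroup

variable {Λ : Set ℕ}

theorem two_mul_card_filter_mem_Icc_le (hadd : ∀ a b, a ∈ Λ → b ∈ Λ → a + b ∈ Λ) {k u : ℕ}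
    (hu : u ∉ Λ) (hk : k ≤ u) : 2 * #{x ∈ Icc 1 k | x ∈ Λ} ≤ k := by
  have hex : ∃ v, k ≤ v ∧ v ∉ Λ := ⟨u, hk, hu⟩
  obtain ⟨hkv, hv⟩ := Nat.find_spec hex
  set v := Nat.find hex
  have hle : #{x ∈ Icc 1 k | x ∈ Λ} ≤ #{x ∈ Icc 1 k | x ∉ Λ} := by
    refine card_le_card_of_injOn (v - ·) (fun x hx => ?_) (fun x hx y hy hxy => ?_)
    · simp only [coe_filter, mem_Icc, Set.mem_ofPred_eq] at hx ⊢
      have hxv : x < v := lt_of_le_of_ne (by omega) fun h => hv (h ▸ hx.2)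
      have hgap : v - x ∉ Λ := fun h =>
        hv (by simpa [Nat.add_sub_cancel' hxv.le] using hadd x _ hx.2 h)
      have : v - x < k := by
        by_contra
        exact Nat.find_min hex (show v - x < v by omega) ⟨by omega, hgap⟩
      exact ⟨⟨by omega, by omega⟩, hgap⟩
    · simp only [coe_filter, mem_Icc, Set.mem_ofPred_eq] at hx hy
      simp only at hxy
      omega
  have := card_filter_add_card_filter_not (s := Icc 1 k) (· ∈ Λ)
  simp only [Nat.card_Icc] at this
  omega

theorem isBallot_filter_mem_Icc (hadd : ∀ a b, a ∈ Λ → b ∈ Λ → a + b ∈ Λ) {n u : ℕ}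
    (hu : u ∉ Λ) (hn : n ≤ u) : IsBallot {x ∈ Icc 1 n | x ∈ Λ} := by
  intro k
  have : {x ∈ {x ∈ Icc 1 n | x ∈ Λ} | x ≤ k} = {x ∈ Icc 1 (min n k) | x ∈ Λ} := by
    ext x
    simp only [mem_filter, mem_Icc, le_min_iff]
    tauto
  rw [this]
  exact (two_mul_card_filter_mem_Icc_le hadd hu (by omega)).trans (min_le_right _ _)

noncomputable def conductor (Λ : Set ℕ) : ℕ := sInf {m | ∀ n, m ≤ n → n ∈ Λ}

theorem mem_of_conductor_le (hfin : Λᶜ.Finite) {n : ℕ} (hn : conductor Λ ≤ n) : n ∈ Λ := by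
  obtain ⟨N, hN⟩ := hfin.bddAbove
  have hne : {m | ∀ n, m ≤ n → n ∈ Λ}.Nonempty :=
    ⟨N + 1, fun n hn => by_contra fun h => by have := hN h; omega⟩
  exact Nat.sInf_mem hne n hn

theorem conductor_sub_one_notMem (h : 0 < conductor Λ) : conductor Λ - 1 ∉ Λ := by
  intro hmem
  have hc : ∀ n, conductor Λ ≤ n → n ∈ Λ := Nat.sInf_mem (Nat.nonempty_of_pos_sInf h)
  have : conductor Λ ≤ conductor Λ - 1 := Nat.sInf_le fun n hn => by
    rcases hn.eq_or_lt with rfl | hlt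
    · exact hmem
    · exact hc n (by omega)
  omega

structure IsSymmetricOfGenus (g : ℕ) (Λ : Set ℕ) : Prop where
  zero_mem : 0 ∈ Λ
  add_mem : ∀ a b, a ∈ Λ → b ∈ Λ → a + b ∈ Λ
  finite_compl : Λᶜ.Finite
  ncard_compl : Λᶜ.ncard = g
  conductor_eq : conductor Λ = 2 * g

namespace IsSymmetricOfGenus

variable {g : ℕ} {Λ Λ' : Set ℕ}

theorem mem_of_two_mul_le (h : IsSymmetricOfGenus g Λ) {n : ℕ} (hn : 2 * g ≤ n) : n ∈ Λ :=
  mem_of_conductor_le h.finite_compl (h.conductor_eq ▸ hn)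

theorem two_mul_sub_one_notMem (h : IsSymmetricOfGenus g Λ) (hg : 0 < g) : 2 * g - 1 ∉ Λ :=
  h.conductor_eq ▸ conductor_sub_one_notMem (by rw [h.conductor_eq]; omega)

theorem sub_notMem_of_mem (h : IsSymmetricOfGenus g Λ) {x : ℕ} (hx : x ∈ Λ)
    (hx2 : x < 2 * g) : 2 * g - 1 - x ∉ Λ := fun hmem =>
  h.two_mul_sub_one_notMem (by omega)
    (by simpa [show x + (2 * g - 1 - x) = 2 * g - 1 by omega] using h.add_mem _ _ hx hmem)

theorem sub_mem_of_notMem (h : IsSymmetricOfGenus g Λ) {t : ℕ} (ht : t ∉ Λ) :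
    2 * g - 1 - t ∈ Λ := by
  have ht2 : t < 2 * g := by
    by_contra h'
    exact ht (h.mem_of_two_mul_le (by omega))
  have hgaps : Λᶜ = ↑{x ∈ range (2 * g) | x ∉ Λ} := by
    ext x
    simp only [Set.mem_compl_iff, coe_filter, mem_range, Set.mem_ofPred_eq, iff_and_self]
    intro hx
    by_contra
    exact hx (h.mem_of_two_mul_le (by omega))
  have hcard_gaps : #{x ∈ range (2 * g) | x ∉ Λ} = g := by
    rw [← Set.ncard_coe_finset, ← hgaps, h.ncard_compl]
  have hcard_mem : #{x ∈ range (2 * g) | x ∈ Λ} = g := by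
    have := card_filter_add_card_filter_not (s := range (2 * g)) (· ∈ Λ)
    rw [card_range] at this
    omega
  obtain ⟨x, hx, rfl⟩ := surj_on_of_inj_on_of_card_le (s := {x ∈ range (2 * g) | x ∈ Λ})
    (t := {x ∈ range (2 * g) | x ∉ Λ})
    (fun x _ => 2 * g - 1 - x)
    (fun x hx => by
      simp only [mem_filter, mem_range] at hx ⊢
      exact ⟨by omega, h.sub_notMem_of_mem hx.2 hx.1⟩)
    (fun a b ha hb hab => by simp only [mem_filter, mem_range] at ha hb; omega)
    (by omega) t (by simp [ht2, ht])
  simp only [mem_filter, mem_range] at hx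
  rw [show 2 * g - 1 - (2 * g - 1 - x) = x by omega]
  exact hx.2

theorem mem_iff_sub_notMem (h : IsSymmetricOfGenus g Λ) {n : ℕ} (hn : n < 2 * g) :
    n ∈ Λ ↔ 2 * g - 1 - n ∉ Λ :=
  ⟨(h.sub_notMem_of_mem · hn), fun hsub => by_contra fun hn' => hsub (h.sub_mem_of_notMem hn')⟩

theorem eq_of_forall_mem_Icc_iff (h : IsSymmetricOfGenus g Λ) (h' : IsSymmetricOfGenus g Λ')
    (hI : ∀ x ∈ Icc 1 (g - 1), x ∈ Λ ↔ x ∈ Λ') : Λ = Λ' := by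
  have hsmall : ∀ n < g, n ∈ Λ ↔ n ∈ Λ' := by
    intro n hn
    rcases n.eq_zero_or_pos with rfl | hpos
    · exact iff_of_true h.zero_mem h'.zero_mem
    · exact hI n (mem_Icc.2 ⟨hpos, by omega⟩)
  ext n
  rcases lt_or_ge n g with hn | hn
  · exact hsmall n hn
  rcases lt_or_ge n (2 * g) with hn2 | hn2
  · rw [h.mem_iff_sub_notMem hn2, h'.mem_iff_sub_notMem hn2, hsmall _ (by omega)]
  · exact iff_of_true (h.mem_of_two_mul_le hn2) (h'.mem_of_two_mul_le hn2)

theorem filter_mem_Icc_mem_ballotSets (h : IsSymmetricOfGenus g Λ) :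
    {x ∈ Icc 1 (g - 1) | x ∈ Λ} ∈ ballotSets (g - 1) ((g - 1) / 2) := by
  have hS := filter_subset (· ∈ Λ) (Icc 1 (g - 1))
  have hb : IsBallot {x ∈ Icc 1 (g - 1) | x ∈ Λ} := by
    rcases g.eq_zero_or_pos with rfl | hg
    · simp [IsBallot]
    · exact isBallot_filter_mem_Icc h.add_mem (h.two_mul_sub_one_notMem hg) (by omega)
  simp only [ballotSets, mem_filter, mem_powerset]
  exact ⟨hS, by have := hb.two_mul_card_le hS; omega, hb⟩

end IsSymmetricOfGenus

end NumericalSemigroup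

open NumericalSemigroup

/-- The number of symmetric numerical semigroups of genus g
(those whose conductor, i.e. the least c with c + ℕ ⊆ Λ, equals 2g) is at most
C(g-1, ⌈(g-1)/2⌉). -/
theorem card_symmetric_numerical_semigroups_le (g : ℕ) :
    {Λ : Set ℕ | 0 ∈ Λ ∧ (∀ a b, a ∈ Λ → b ∈ Λ → a + b ∈ Λ) ∧
        Λᶜ.Finite ∧ Λᶜ.ncard = g ∧
        sInf {m : ℕ | ∀ n, m ≤ n → n ∈ Λ} = 2 * g}.ncard
      ≤ Nat.choose (g - 1) ((g - 1 + 1) / 2) := by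
  calc _ ≤ (ballotSets (g - 1) ((g - 1) / 2) : Set (Finset ℕ)).ncard := by
        refine Set.ncard_le_ncard_of_injOn (fun Λ => {x ∈ Icc 1 (g - 1) | x ∈ Λ}) ?_ ?_
        · rintro Λ ⟨h0, hadd, hfin, hcard, hc⟩
          exact IsSymmetricOfGenus.filter_mem_Icc_mem_ballotSets ⟨h0, hadd, hfin, hcard, hc⟩
        · rintro Λ ⟨h0, hadd, hfin, hcard, hc⟩ Λ' ⟨h0', hadd', hfin', hcard', hc'⟩ he
          refine IsSymmetricOfGenus.eq_of_forall_mem_Icc_iff ⟨h0, hadd, hfin, hcard, hc⟩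
            ⟨h0', hadd', hfin', hcard', hc'⟩ fun x hx => ?_
          simpa [hx] using Finset.ext_iff.1 he x
    _ = (g - 1).choose ((g - 1) / 2) := by
        rw [Set.ncard_coe_finset, card_ballotSets (Nat.mul_div_le _ _)]
    _ = _ := Nat.choose_symm_of_eq_add (by omega)
end
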